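/- For all integers r ≥ 0, m ≥ 1, and n ≥ 1, S_m^{(r)}(n) = S_1^{(r)}(n) · ((−1)^{m-1} / ((r+2)(r+3)···(r+m))) · det H, where H is the (m−1)×(m−1) lower Hessenberg matrix with diagonal entries H_{i,i} = −(i+1)·(n + r/2), superdiagonal entries H_{i,i+1} = r + i + 1, entries H_{i,j} = r · C(i+1, j) · B_{i+1−j} for j < i (with B_k the Bernoulli numbers), and zeros above the superdiagonal. -/

import Mathlib

/-- Hyper-sum of powers of integers: `S m 0 n = n^m` and
`S m (r+1) n = ∑ i in [1..n], S m r i`. -/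
def S (m : ℕ) : ℕ → ℕ → ℚ
  | 0, n => (n : ℚ) ^ m
  | r + 1, n => ∑ i ∈ Finset.Icc 1 n, S m r i

/-!
Write `S_k` for `S k r n`. Faulhaber's formula `(k + 1) ∑_{i < n} i ^ k = B_{k+1}(n) - B_{k+1}`,
summed `r` times, expresses `(k + 1) S_k^{(r+1)}(n)` through the `S_j^{(r)}(n + 1)`. An induction
on `r` and `n` turns this into the recurrence, for `k ≥ 1`,
`(k + 1) (n + r/2) S_k = (r + k + 1) S_{k+1} + r ∑_{j < k-1} C(k+1, j+1) B_{k-j} S_{j+1}`.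
For `k = 1, …, m - 1` these say `H (S_1, …, S_{m-1}) = (0, …, 0, -(r + m) S_m)`. Cramer's rule
for the first unknown, expanded along the first column, leaves the minor without the last row and
the first column, which is triangular with diagonal `r + 2, …, r + m - 1`.
-/

open Finset Matrix

lemma S_succ_zero (m r : ℕ) : S m (r + 1) 0 = 0 := rfl

lemma S_succ_succ (m r n : ℕ) : S m (r + 1) (n + 1) = S m (r + 1) n + S m r (n + 1) :=
  sum_Icc_succ_top (by omega) _

/-- `B_{k+1}(x) - B_{k+1}`, with every power `x ^ (j + 1)` replaced by `S (j + 1) r n`. -/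
def bernoulliHyperSum (k r n : ℕ) : ℚ :=
  ∑ j ∈ range (k + 1), ((k + 1).choose (j + 1) : ℚ) * bernoulli (k - j) * S (j + 1) r n

lemma bernoulliHyperSum_zero (k n : ℕ) :
    bernoulliHyperSum k 0 n = (k + 1) * ∑ i ∈ range n, (i : ℚ) ^ k := by
  rw [Polynomial.sum_range_pow_eq_bernoulli_sub, Polynomial.bernoulli_def,
    Polynomial.eval_finsetSum, sum_range_succ', bernoulliHyperSum]
  simp only [Polynomial.eval_monomial, Nat.sub_zero, Nat.choose_zero_right, Nat.cast_one,
    mul_one, pow_zero, add_sub_cancel_right, Nat.succ_sub_succ]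
  refine sum_congr rfl fun j _ => ?_
  rw [S]; ring

lemma bernoulliHyperSum_succ_zero (k r : ℕ) : bernoulliHyperSum k (r + 1) 0 = 0 := by
  simp [bernoulliHyperSum, S_succ_zero]

lemma bernoulliHyperSum_succ_succ (k r n : ℕ) :
    bernoulliHyperSum k (r + 1) (n + 1)
      = bernoulliHyperSum k (r + 1) n + bernoulliHyperSum k r (n + 1) := by
  simp only [bernoulliHyperSum, S_succ_succ, mul_add, sum_add_distrib]

lemma S_one_eq_sum_range (k n : ℕ) (hk : k ≠ 0) :
    S k 1 n = ∑ i ∈ range (n + 1), (i : ℚ) ^ k := by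
  rw [sum_range_succ', Nat.cast_zero, zero_pow hk, add_zero, S, ← Ico_add_one_right_eq_Icc,
    sum_Ico_eq_sum_range]
  simp [S, add_comm]

lemma succ_mul_S_succ (k r n : ℕ) (hk : k ≠ 0) :
    (k + 1) * S k (r + 1) n = bernoulliHyperSum k r (n + 1) := by
  induction r generalizing n with
  | zero => rw [bernoulliHyperSum_zero, S_one_eq_sum_range k n hk]
  | succ r ih =>
    induction n with
    | zero =>
      rw [bernoulliHyperSum_succ_succ, bernoulliHyperSum_succ_zero, ← ih, S_succ_zero,
        S_succ_zero]
      ring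
    | succ n ihn => rw [S_succ_succ, bernoulliHyperSum_succ_succ, ← ihn, ← ih]; ring

lemma succ_mul_mul_S (k r n : ℕ) (hk : k ≠ 0) :
    (k + 1) * n * S k r n = (k + 1) * S (k + 1) r n + r * bernoulliHyperSum k r n := by
  induction r generalizing n with
  | zero => simp only [S, pow_succ]; ring
  | succ r ih =>
    induction n with
    | zero => simp [S_succ_zero, bernoulliHyperSum_succ_zero]
    | succ n ihn =>
      rw [S_succ_succ, S_succ_succ, bernoulliHyperSum_succ_succ]
      have ih_succ := ih (n + 1)
      push_cast at ihn ih_succ ⊢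
      linear_combination ihn + ih_succ + succ_mul_S_succ k r n hk

theorem Matrix.det_mul_apply_zero_of_mulVec_eq_single {R : Type*} [CommRing R] {N : ℕ}
    (A : Matrix (Fin (N + 1)) (Fin (N + 1)) R) {v : Fin (N + 1) → R} {c : R}
    (h : A *ᵥ v = Pi.single (Fin.last N) c) :
    A.det * v 0 = (-1) ^ N * c * (A.submatrix Fin.castSucc Fin.succ).det := by
  have hcramer : A.cramer (A *ᵥ v) = A.det • v := by
    rw [cramer_eq_adjugate_mulVec, mulVec_mulVec, adjugate_mul, smul_mulVec, one_mulVec]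
  rw [← smul_eq_mul, ← Pi.smul_apply, ← hcramer, h, cramer_apply, det_succ_column_zero,
    Fin.sum_univ_castSucc]
  simp only [updateCol_self, Fin.castSucc_ne_last, Pi.single_eq_of_ne, Pi.single_eq_same,
    Fin.val_last, Fin.succAbove_last, ne_eq, not_false_eq_true, mul_zero, zero_mul,
    sum_const_zero, zero_add]
  rw [← Fin.succAbove_zero, submatrix_updateCol_succAbove]

def hessenbergEntry (r n i j : ℕ) : ℚ :=
  if j = i then -((i : ℚ) + 2) * ((n : ℚ) + (r : ℚ) / 2)
  else if j = i + 1 then (r : ℚ) + (i : ℚ) + 2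
  else if j < i then (r : ℚ) * ((i + 2).choose (j + 1) : ℚ) * bernoulli (i + 1 - j)
  else 0

/-- The matrix `H` of the theorem for `m = N + 2`. -/
def hessenberg (r n N : ℕ) : Matrix (Fin (N + 1)) (Fin (N + 1)) ℚ :=
  Matrix.of fun i j => hessenbergEntry r n i j

lemma hessenbergEntry_of_succ_lt (r n : ℕ) {i j : ℕ} (h : i + 1 < j) :
    hessenbergEntry r n i j = 0 := by
  simp only [hessenbergEntry]
  rw [if_neg (by omega), if_neg (by omega), if_neg (by omega)]

lemma sum_hessenbergEntry_mul_S (r n i : ℕ) :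
    ∑ j ∈ range (i + 2), hessenbergEntry r n i j * S (j + 1) r n = 0 := by
  have hrec := succ_mul_mul_S (i + 1) r n (by omega)
  have hlow : ∀ j ∈ range i, hessenbergEntry r n i j * S (j + 1) r n
      = r * (((i + 2).choose (j + 1) : ℚ) * bernoulli (i + 1 - j) * S (j + 1) r n) := by
    intro j hj
    rw [mem_range] at hj
    rw [hessenbergEntry, if_neg (by omega), if_neg (by omega), if_pos hj]
    ring
  rw [bernoulliHyperSum, sum_range_succ, sum_range_succ] at hrec
  rw [sum_range_succ, sum_range_succ, sum_congr rfl hlow, ← mul_sum]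
  simp only [hessenbergEntry, if_pos, if_neg (Nat.succ_ne_self i)] at hrec ⊢
  simp only [Nat.choose_self, Nat.choose_succ_self_right, Nat.sub_self,
    show i + 1 + 1 = i + 2 from rfl, bernoulli_zero, bernoulli_one,
    show i + 1 - i = 1 by omega] at hrec ⊢
  push_cast at hrec ⊢
  linear_combination -hrec

lemma hessenberg_mulVec_S (r n N : ℕ) :
    hessenberg r n N *ᵥ (fun j => S (j + 1) r n)
      = Pi.single (Fin.last N) (-((r : ℚ) + N + 2) * S (N + 2) r n) := by
  ext i
  rw [Matrix.mulVec, dotProduct]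
  simp only [hessenberg, Matrix.of_apply]
  rw [Fin.sum_univ_eq_sum_range (fun j => hessenbergEntry r n i j * S (j + 1) r n)]
  induction i using Fin.lastCases with
  | last =>
    have h := sum_hessenbergEntry_mul_S r n N
    rw [sum_range_succ] at h
    rw [Fin.val_last, Pi.single_eq_same, eq_neg_of_add_eq_zero_left h, hessenbergEntry,
      if_neg (by omega), if_pos rfl]
    ring
  | cast i =>
    rw [Pi.single_eq_of_ne (Fin.castSucc_lt_last i).ne, Fin.val_castSucc,
      ← sum_hessenbergEntry_mul_S r n i]
    refine (sum_subset (by simp) fun j hj hji => ?_).symm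
    simp only [mem_range] at hj hji
    rw [hessenbergEntry_of_succ_lt r n (by omega), zero_mul]

lemma det_hessenberg_submatrix (r n N : ℕ) :
    ((hessenberg r n N).submatrix Fin.castSucc Fin.succ).det
      = ∏ i ∈ range N, ((r : ℚ) + i + 2) := by
  rw [Matrix.det_of_isLowerTriangular, ← Fin.prod_univ_eq_prod_range]
  · refine prod_congr rfl fun i _ => ?_
    simp [hessenberg, hessenbergEntry]
  · intro i j hij
    have : (i : ℕ) < j := hij
    simp only [hessenberg, Matrix.submatrix_apply, Matrix.of_apply]
    exact hessenbergEntry_of_succ_lt r n (by simp; omega)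

lemma prod_Icc_two_eq_prod_range (r N : ℕ) :
    ∏ k ∈ Icc 2 (N + 2), ((r : ℚ) + k) = ∏ i ∈ range (N + 1), ((r : ℚ) + i + 2) := by
  rw [← Ico_add_one_right_eq_Icc, prod_Ico_eq_prod_range, show N + 2 + 1 - 2 = N + 1 by omega]
  refine prod_congr rfl fun i _ => ?_
  push_cast
  ring

lemma S_eq_mul_det_hessenberg (r n N : ℕ) :
    S (N + 2) r n = S 1 r n * ((-1 : ℚ) ^ (N + 1) / ∏ k ∈ Icc 2 (N + 2), ((r : ℚ) + k))
      * (hessenberg r n N).det := by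
  have hcramer := (hessenberg r n N).det_mul_apply_zero_of_mulVec_eq_single
    (hessenberg_mulVec_S r n N)
  rw [det_hessenberg_submatrix, Fin.val_zero, zero_add] at hcramer
  rw [prod_Icc_two_eq_prod_range]
  have hdet : (hessenberg r n N).det * S 1 r n
      = (-1) ^ (N + 1) * (∏ i ∈ range (N + 1), ((r : ℚ) + i + 2)) * S (N + 2) r n := by
    rw [hcramer, prod_range_succ]
    ring
  set P := ∏ i ∈ range (N + 1), ((r : ℚ) + i + 2)
  have hP : P ≠ 0 := prod_ne_zero_iff.2 fun i _ => by positivity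
  have hsign : ((-1 : ℚ) ^ (N + 1)) ^ 2 = 1 := by
    rw [← pow_mul]
    exact Even.neg_one_pow ⟨N + 1, by ring⟩
  rw [mul_div_assoc', div_mul_eq_mul_div, eq_div_iff hP]
  linear_combination -(-1 : ℚ) ^ (N + 1) * hdet - P * S (N + 2) r n * hsign

theorem stmt_12_general (r m n : ℕ) (hm : 1 ≤ m)
    (H : Matrix (Fin (m - 1)) (Fin (m - 1)) ℚ)
    (hH : ∀ i j : Fin (m - 1),
      H i j =
        if (j : ℕ) = (i : ℕ) then -((i : ℚ) + 2) * ((n : ℚ) + (r : ℚ) / 2)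
        else if (j : ℕ) = (i : ℕ) + 1 then (r : ℚ) + (i : ℚ) + 2
        else if (j : ℕ) < (i : ℕ) then
          (r : ℚ) * (((i : ℕ) + 2).choose ((j : ℕ) + 1) : ℚ) * bernoulli ((i : ℕ) + 1 - (j : ℕ))
        else 0) :
    S m r n = S 1 r n * ((-1 : ℚ) ^ (m - 1) / ∏ k ∈ Finset.Icc 2 m, ((r : ℚ) + k))
        * H.det := by
  rcases m with _ | _ | N
  · omega
  · simp [Matrix.det_isEmpty]
  · obtain rfl : H = hessenberg r n N := Matrix.ext hH
    exact S_eq_mul_det_hessenberg r n N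

theorem stmt_12 (r m n : ℕ) (hm : 1 ≤ m) (hn : 1 ≤ n)
    (H : Matrix (Fin (m - 1)) (Fin (m - 1)) ℚ)
    (hH : ∀ i j : Fin (m - 1),
      H i j =
        if (j : ℕ) = (i : ℕ) then -((i : ℚ) + 2) * ((n : ℚ) + (r : ℚ) / 2)
        else if (j : ℕ) = (i : ℕ) + 1 then (r : ℚ) + (i : ℚ) + 2
        else if (j : ℕ) < (i : ℕ) then
          (r : ℚ) * (((i : ℕ) + 2).choose ((j : ℕ) + 1) : ℚ) * bernoulli ((i : ℕ) + 1 - (j : ℕ))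
        else 0) :
    S m r n = S 1 r n * ((-1 : ℚ) ^ (m - 1) / ∏ k ∈ Finset.Icc 2 m, ((r : ℚ) + k))
        * H.det :=
  stmt_12_general r m n hm H hH
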